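/- arXiv:math/0601515 — 8 statements merged into one kernel-verified Lean document; each statement's English description precedes it below -/
import Mathlib

section
/- Let p ≥ 2 and e ≥ 1 be integers, r ≥ 1, and let a : ZMod r → ℤ satisfy e ≥ p * a i - a (i+1) ≥ 0 for all i. Then 0 ≤ (p-1) * a i ≤ e for all i. -/
theorem stmt_0 (p e : ℤ) (hp : 2 ≤ p) (he : 1 ≤ e) (r : ℕ) (hr : 1 ≤ r)
    (a : ZMod r → ℤ)
    (h : ∀ i : ZMod r, 0 ≤ p * a i - a (i + 1) ∧ p * a i - a (i + 1) ≤ e) :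
    ∀ i : ZMod r, 0 ≤ (p - 1) * a i ∧ (p - 1) * a i ≤ e := by
  haveI : NeZero r := ⟨by omega⟩
  obtain ⟨i0, -, hmin⟩ := Finset.exists_min_image Finset.univ a ⟨0, Finset.mem_univ 0⟩
  obtain ⟨i1, -, hmax⟩ := Finset.exists_max_image Finset.univ a ⟨0, Finset.mem_univ 0⟩
  have hm : 0 ≤ a i0 := by
    have h1 := (h i0).1
    have h2 := hmin (i0 + 1) (Finset.mem_univ _)
    nlinarith
  have hM : (p - 1) * a i1 ≤ e := by
    have h1 := (h i1).2
    have h2 := hmax (i1 + 1) (Finset.mem_univ _)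
    nlinarith
  intro i
  have h3 := hmin i (Finset.mem_univ _)
  have h4 := hmax i (Finset.mem_univ _)
  constructor
  · nlinarith
  · nlinarith
end

section
/- Let p ≥ 2, e ≥ 1, r ≥ 1, and let a : ZMod r → ℤ satisfy e ≥ p * a i - a (i+1) ≥ 0 for all i. If a j = 0 for some j, then a i = 0 for all i. -/
theorem stmt_1 (p e : ℤ) (hp : 2 ≤ p) (he : 1 ≤ e) (r : ℕ) (hr : 1 ≤ r)
    (a : ZMod r → ℤ)
    (h : ∀ i : ZMod r, 0 ≤ p * a i - a (i + 1) ∧ p * a i - a (i + 1) ≤ e)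
    (j : ZMod r) (hj : a j = 0) :
    ∀ i : ZMod r, a i = 0 := by
  haveI : NeZero r := ⟨by omega⟩
  have hp0 : (0:ℤ) < p := by linarith
  have key : ∀ i : ZMod r, ∀ n : ℕ, a (i + n) ≤ p ^ n * a i := by
    intro i n
    induction n with
    | zero => simp
    | succ n ih =>
      have h1 := (h (i + n)).1
      calc a (i + ((n+1 : ℕ) : ZMod r)) = a (i + n + 1) := by push_cast; ring_nf
        _ ≤ p * a (i + n) := by linarith
        _ ≤ p * (p ^ n * a i) := by nlinarith
        _ = p ^ (n+1) * a i := by ring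
  have hpr : (2:ℤ) ≤ p ^ r := by
    calc (2:ℤ) = 2^1 := by norm_num
    _ ≤ 2 ^ r := pow_le_pow_right₀ (by norm_num) hr
    _ ≤ p ^ r := pow_le_pow_left₀ (by norm_num) hp r
  have hnonneg : ∀ i : ZMod r, 0 ≤ a i := by
    intro i
    have hk := key i r
    rw [ZMod.natCast_self r, add_zero] at hk
    nlinarith
  have forward : ∀ n : ℕ, a (j + n) = 0 := by
    intro n
    induction n with
    | zero => simpa
    | succ n ih =>
      have h1 := (h (j + n)).1
      have h2 := hnonneg (j + n + 1)
      have heq : a (j + ((n+1:ℕ) : ZMod r)) = a (j + n + 1) := by push_cast; ring_nf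
      rw [heq, ih] at *
      rw [ih] at h1
      linarith
  intro i
  have hfi := forward (i - j).val
  rwa [ZMod.natCast_val, ZMod.cast_id, show j + (i - j) = i from by ring] at hfi
end

section
/- Let p ≥ 2, e ≥ 1, r ≥ 1 with (p-1) ∣ e, and let a : ZMod r → ℤ satisfy e ≥ p * a i - a (i+1) ≥ 0 for all i. If a j = e/(p-1) for some j, then a i = e/(p-1) for all i. -/
theorem stmt_2 (p e : ℤ) (hp : 2 ≤ p) (he : 1 ≤ e) (hd : (p - 1) ∣ e)
    (r : ℕ) (hr : 1 ≤ r) (a : ZMod r → ℤ)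
    (h : ∀ i : ZMod r, 0 ≤ p * a i - a (i + 1) ∧ p * a i - a (i + 1) ≤ e)
    (j : ZMod r) (hj : a j = e / (p - 1)) :
    ∀ i : ZMod r, a i = e / (p - 1) := by
  haveI : NeZero r := ⟨by omega⟩
  set c := e / (p - 1) with hc
  have hce : (p - 1) * c = e := Int.mul_ediv_cancel' hd
  -- forward: a (j + k) - c ≥ 0 for all k : ℕ
  have fwd : ∀ k : ℕ, 0 ≤ a (j + k) - c := by
    intro k
    induction k with
    | zero => simp [hj]
    | succ n ih =>
      have h2 := (h (j + n)).2
      have : a (j + n + 1) - c ≥ p * (a (j + n) - c) := by nlinarith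
      have hnn : 0 ≤ p * (a (j + n) - c) := by positivity
      have heq : (j + ((n + 1 : ℕ) : ZMod r)) = j + (n : ZMod r) + 1 := by push_cast; ring
      rw [heq]
      linarith
  have fwd' : ∀ i : ZMod r, 0 ≤ a i - c := by
    intro i
    calc (0:ℤ) ≤ a (j + ((i - j).val : ℕ)) - c := fwd (i - j).val
      _ = a i - c := by
          congr 1
          have : (((i - j).val : ℕ) : ZMod r) = i - j := by
            simp [ZMod.natCast_val, ZMod.cast_id]
          rw [this]; ring
  -- backward: a (j - k) = c
  have bwd : ∀ k : ℕ, a (j - k) = c := by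
    intro k
    induction k with
    | zero => simpa using hj
    | succ n ih =>
      have h2 := (h (j - (n + 1 : ℕ))).2
      have heq : (j - (n + 1 : ℕ)) + 1 = j - n := by push_cast; ring
      rw [heq, ih] at h2
      have h3 := fwd' (j - (n + 1 : ℕ))
      nlinarith
  intro i
  have key : j - (((j - i).val : ℕ) : ZMod r) = i := by
    have : (((j - i).val : ℕ) : ZMod r) = j - i := by
      simp [ZMod.natCast_val, ZMod.cast_id]
    rw [this]; ring
  have := bwd (j - i).val
  rwa [key] at this
end

section
/- Let p ≥ 2, e ≥ 1, r ≥ 1, and let a : ZMod r → ℤ satisfy 0 < (p-1) * a i < e and e ≥ p * a i - a (i+1) ≥ 0 for all i, and suppose not all a i equal 1. Then there exists an index j such that the function a' defined by a' j = a j - 1 and a' i = a i for i ≠ j still satisfies e ≥ p * a' i - a' (i+1) ≥ 0 for all i. -/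
theorem stmt_3 (p e : ℤ) (hp : 2 ≤ p) (he : 1 ≤ e) (r : ℕ) (hr : 1 ≤ r)
    (a : ZMod r → ℤ)
    (h1 : ∀ i : ZMod r, 0 < (p - 1) * a i ∧ (p - 1) * a i < e)
    (h2 : ∀ i : ZMod r, 0 ≤ p * a i - a (i + 1) ∧ p * a i - a (i + 1) ≤ e)
    (hne : ¬ ∀ i : ZMod r, a i = 1) :
    ∃ j : ZMod r, ∀ i : ZMod r,
      0 ≤ p * Function.update a j (a j - 1) i - Function.update a j (a j - 1) (i + 1) ∧
      p * Function.update a j (a j - 1) i - Function.update a j (a j - 1) (i + 1) ≤ e := by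
  haveI : NeZero r := ⟨by omega⟩
  obtain ⟨j, hj⟩ := Finite.exists_max a
  have hpos : ∀ i, 1 ≤ a i := by
    intro i
    have h := (h1 i).1
    nlinarith
  have haj : 2 ≤ a j := by
    by_contra h
    push_neg at h
    exact hne fun i => by have := hj i; have := hpos i; omega
  refine ⟨j, fun i => ?_⟩
  rcases eq_or_ne i j with hi | hi <;> rcases eq_or_ne (i + 1) j with hi1 | hi1
  · rw [hi1, Function.update_self]
    rw [hi, Function.update_self]
    have := (h1 j).1
    have := (h1 j).2
    constructor <;> nlinarith
  · rw [Function.update_of_ne hi1, hi, Function.update_self]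
    have h2j := h2 j
    have hmax := hj (j + 1)
    constructor <;> nlinarith
  · rw [Function.update_of_ne hi, hi1, Function.update_self]
    have h2i := h2 i
    rw [hi1] at h2i
    have hmax := hj i
    have := (h1 i).2
    constructor <;> nlinarith
  · rw [Function.update_of_ne hi, Function.update_of_ne hi1]
    exact h2 i
end

section
/- Let p ≥ 2, e ≥ 1, r ≥ 1, and let a : ZMod r → ℤ satisfy p * a i - a (i+1) = e for all i. Then (p-1) * a i = e for all i (in particular all a i are equal). -/
theorem stmt_5 (p e : ℤ) (hp : 2 ≤ p) (he : 1 ≤ e) (r : ℕ) (hr : 1 ≤ r)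
    (a : ZMod r → ℤ)
    (h : ∀ i : ZMod r, p * a i - a (i + 1) = e) :
    ∀ i : ZMod r, (p - 1) * a i = e := by
  set b : ZMod r → ℤ := fun i => (p - 1) * a i - e with hbdef
  have hb : ∀ i : ZMod r, b (i + 1) = p * b i := by
    intro i
    simp only [hbdef]
    linear_combination (1 - p) * h i
  have hbn : ∀ n : ℕ, ∀ i : ZMod r, b (i + (n : ZMod r)) = p ^ n * b i := by
    intro n
    induction n with
    | zero => intro i; simp
    | succ k ih =>
      intro i
      have : i + ((k + 1 : ℕ) : ZMod r) = (i + (k : ZMod r)) + 1 := by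
        push_cast; ring
      rw [this, hb, ih, pow_succ]
      ring
  intro i
  have hr0 : (r : ZMod r) = 0 := ZMod.natCast_self r
  have key : b i = p ^ r * b i := by
    have := hbn r i
    rwa [hr0, add_zero] at this
  have hpr : 1 < p ^ r := by
    calc (1 : ℤ) < 2 ^ r := one_lt_pow₀ (by norm_num) (by omega)
    _ ≤ p ^ r := pow_le_pow_left₀ (by norm_num) hp r
  have hb0 : b i = 0 := by nlinarith [key]
  have : (p - 1) * a i - e = 0 := hb0
  linarith
end

section
/- Let p ≥ 2, r ≥ 1, and let a : ZMod r → ℤ satisfy p * a i ≥ a (i+1) for all i. If a j ≤ 0 for some j, then a i ≤ 0 for all i; if moreover additionally p * a i - a (i+1) ≥ 0 holds with the sum of all p * a i - a (i+1) equal to (p-1) * (sum of a i), then all a i = 0. -/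
theorem stmt_6 (p : ℤ) (hp : 2 ≤ p) (r : ℕ) [NeZero r] (hr : 1 ≤ r)
    (a : ZMod r → ℤ)
    (h : ∀ i : ZMod r, a (i + 1) ≤ p * a i)
    (j : ZMod r) (hj : a j ≤ 0) :
    (∀ i : ZMod r, a i ≤ 0) ∧
      ((∀ i : ZMod r, 0 ≤ p * a i - a (i + 1)) →
        (∑ i : ZMod r, (p * a i - a (i + 1))) = (p - 1) * ∑ i : ZMod r, a i →
        ∀ i : ZMod r, a i = 0) := by
  have key : ∀ k : ℕ, a (j + (k : ZMod r)) ≤ 0 := by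
    intro k
    induction k with
    | zero => simpa using hj
    | succ n ih =>
        have h1 := h (j + (n : ZMod r))
        have h2 : p * a (j + (n : ZMod r)) ≤ 0 :=
          mul_nonpos_of_nonneg_of_nonpos (by linarith) ih
        have : ((n : ZMod r) + 1 : ZMod r) = ((n + 1 : ℕ) : ZMod r) := by push_cast; ring
        calc a (j + ((n + 1 : ℕ) : ZMod r)) = a (j + (n : ZMod r) + 1) := by
              rw [← this]; ring_nf
          _ ≤ p * a (j + (n : ZMod r)) := h1
          _ ≤ 0 := h2
  have hall : ∀ i : ZMod r, a i ≤ 0 := by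
    intro i
    have := key (i - j).val
    rwa [ZMod.natCast_val, ZMod.cast_id, add_sub_cancel] at this
  refine ⟨hall, fun hnn hsum i => ?_⟩
  have hs0 : ∑ i : ZMod r, a i ≤ 0 := Finset.sum_nonpos (fun i _ => hall i)
  have hpos : 0 ≤ ∑ i : ZMod r, (p * a i - a (i + 1)) :=
    Finset.sum_nonneg (fun i _ => hnn i)
  have hsz : ∑ i : ZMod r, a i = 0 := by nlinarith
  have := (Finset.sum_eq_zero_iff_of_nonneg
    (fun i (_ : i ∈ Finset.univ) => neg_nonneg.mpr (hall i))).mp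
    (by simp [Finset.sum_neg_distrib, hsz] : ∑ i : ZMod r, (-a i) = 0) i (Finset.mem_univ i)
  linarith [this]
end

section
/- Let p ≥ 2, e ≥ 1 with (p-1) ∣ e, r ≥ 1, and let a : ZMod r → ℤ satisfy e ≥ p * a i - a (i+1) ≥ 0 for all i. Then either a i = 0 for all i, or a i = e/(p-1) for all i, or 0 < (p-1) * a i < e for all i. -/
theorem stmt_11 (p e : ℤ) (hp : 2 ≤ p) (he : 1 ≤ e) (hd : (p - 1) ∣ e)
    (r : ℕ) (hr : 1 ≤ r) (a : ZMod r → ℤ)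
    (h : ∀ i : ZMod r, 0 ≤ p * a i - a (i + 1) ∧ p * a i - a (i + 1) ≤ e) :
    (∀ i : ZMod r, a i = 0) ∨ (∀ i : ZMod r, a i = e / (p - 1)) ∨
      (∀ i : ZMod r, 0 < (p - 1) * a i ∧ (p - 1) * a i < e) := by
  haveI : NeZero r := ⟨by omega⟩
  obtain ⟨E, hE⟩ := hd
  have hp1 : (0:ℤ) < p - 1 := by omega
  have hEdiv : e / (p - 1) = E := by
    rw [hE]; exact Int.mul_ediv_cancel_left _ (by omega)
  have hEpos : 0 < E := by nlinarith
  -- bounds from min and max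
  have hne : (Finset.univ : Finset (ZMod r)).Nonempty := Finset.univ_nonempty
  set m := Finset.univ.inf' hne a with hm
  set M := Finset.univ.sup' hne a with hM
  have hmle : ∀ i, m ≤ a i := fun i => Finset.inf'_le a (Finset.mem_univ i)
  have hleM : ∀ i, a i ≤ M := fun i => Finset.le_sup' a (Finset.mem_univ i)
  have hm0 : 0 ≤ m := by
    obtain ⟨j, -, hj⟩ := Finset.exists_mem_eq_inf' hne a
    have h1 := (h j).1
    have h2 := hmle (j + 1)
    nlinarith [hj]
  have hME : M ≤ E := by
    obtain ⟨j, -, hj⟩ := Finset.exists_mem_eq_sup' hne a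
    have h1 := (h j).2
    have h2 := hleM (j + 1)
    nlinarith [hj]
  have key : ∀ (i : ZMod r) (j : ZMod r), ∃ n : ℕ, j = i + n := by
    intro i j
    exact ⟨(j - i).val, by rw [ZMod.natCast_val, ZMod.cast_id]; ring⟩
  by_cases h0 : ∃ i, a i = 0
  · left
    obtain ⟨i, hi⟩ := h0
    have step : ∀ k : ZMod r, a k = 0 → a (k + 1) = 0 := by
      intro k hk
      have h1 := (h k).1
      have h2 := hm0.trans (hmle (k + 1))
      nlinarith
    have hall : ∀ n : ℕ, a (i + n) = 0 := by
      intro n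
      induction n with
      | zero => simpa using hi
      | succ n ih =>
        have := step (i + n) ih
        rwa [Nat.cast_succ, ← add_assoc]
    intro j
    obtain ⟨n, hn⟩ := key i j
    rw [hn]; exact hall n
  · by_cases hEc : ∃ i, a i = E
    · right; left
      obtain ⟨i, hi⟩ := hEc
      have step : ∀ k : ZMod r, a k = E → a (k + 1) = E := by
        intro k hk
        have h1 := (h k).2
        have h2 := (hleM (k + 1)).trans hME
        nlinarith
      have hall : ∀ n : ℕ, a (i + n) = E := by
        intro n
        induction n with
        | zero => simpa using hi
        | succ n ih =>
          have := step (i + n) ih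
          rwa [Nat.cast_succ, ← add_assoc]
      intro j
      obtain ⟨n, hn⟩ := key i j
      rw [hn, hEdiv]; exact hall n
    · right; right
      intro i
      push_neg at h0 hEc
      have h1 : 0 ≤ a i := hm0.trans (hmle i)
      have h2 : a i ≤ E := (hleM i).trans hME
      have h3 := h0 i
      have h4 := hEc i
      constructor
      · nlinarith [lt_of_le_of_ne h1 (Ne.symm h3)]
      · nlinarith [lt_of_le_of_ne h2 h4]
end

section
/- Let p ≥ 2, e = p - 1, r ≥ 1, and let a : ZMod r → ℤ satisfy 0 ≤ p a i - a(i+1) ≤ e for all i; then either a i = 0 for all i or a i = 1 for all i. -/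
theorem stmt_12 (p e : ℤ) (hp : 2 ≤ p) (hpe : e = p - 1) (r : ℕ) (hr : 1 ≤ r)
    (a : ZMod r → ℤ)
    (h : ∀ i : ZMod r, 0 ≤ p * a i - a (i + 1) ∧ p * a i - a (i + 1) ≤ e) :
    (∀ i : ZMod r, a i = 0) ∨ (∀ i : ZMod r, a i = 1) := by
  subst hpe
  haveI : NeZero r := ⟨by omega⟩
  have key : ∀ i, a i = 0 ∨ a i = 1 := by
    obtain ⟨iM, hM⟩ := Finite.exists_max a
    obtain ⟨im, hm⟩ := Finite.exists_min a
    have hM1 : a iM ≤ 1 := by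
      have h1 := (h iM).2
      have h2 := hM (iM + 1)
      nlinarith
    have hm0 : 0 ≤ a im := by
      have h1 := (h im).1
      have h2 := hm (iM + 1)
      have h3 := hm (im + 1)
      nlinarith
    intro i
    have := hM i; have := hm i
    omega
  have step : ∀ i, a (i + 1) = a i := by
    intro i
    obtain ⟨hl, hr2⟩ := h i
    rcases key i with h0 | h0 <;> rcases key (i + 1) with h1 | h1
    · rw [h0, h1]
    · exfalso; rw [h0, h1] at hl; omega
    · exfalso; rw [h0, h1] at hr2; omega
    · rw [h0, h1]
  have const : ∀ n : ℕ, a (n : ZMod r) = a 0 := by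
    intro n
    induction n with
    | zero => norm_num
    | succ k ih => push_cast; rw [step (k : ZMod r)]; push_cast at ih; exact ih
  have hall : ∀ i : ZMod r, a i = a 0 := by
    intro i
    have := const i.val
    rwa [ZMod.natCast_val, ZMod.cast_id] at this
  rcases key 0 with h0 | h0
  · left; intro i; rw [hall i, h0]
  · right; intro i; rw [hall i, h0]
end
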